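/- In the explicit two-worker direct mechanism with lying cost c > 0, truthful reporting is strictly dominant for every worker type: for each worker i, each true type θ ∈ {B,E}, each opponent report r' ∈ {B,E}, and each own report r ≠ θ, the lying-adjusted payoff of a type-θ worker from reporting θ is strictly greater than the lying-adjusted payoff from reporting r, the opponent reporting r' in both cases. -/
import Mathlib


/-- Worker types: beginner or expert. -/
inductive WorkerType | B | E
deriving DecidableEq

/-- Contracts: salary High/Low paired with task Mixed/Delicate/Perfunctory. -/
inductive Contract | HM | HD | LM | LP
deriving DecidableEq

/-- A worker's payoff from a contract, given the worker's own type. -/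
def payoff : Contract → WorkerType → ℝ
  | .HM, .E => 4
  | .HD, .E => 2
  | .LM, .E => 1
  | .LP, .E => 0
  | .HM, .B => 4
  | .HD, .B => 2
  | .LM, .B => 2
  | .LP, .B => 4

/-- The direct mechanism: a pair of reports ↦ (worker 1's contract, worker 2's contract). -/
def directPair : WorkerType → WorkerType → Contract × Contract
  | .B, .B => (.LM, .LM)
  | .B, .E => (.LP, .HD)
  | .E, .B => (.HD, .LP)
  | .E, .E => (.HM, .HM)

/-- Contract assigned by the direct mechanism to worker `i` under report profile `r`. -/
def directM (r : Fin 2 → WorkerType) (i : Fin 2) : Contract :=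
  if i = 0 then (directPair (r 0) (r 1)).1 else (directPair (r 0) (r 1)).2

/-- Lying-adjusted payoff in the explicit direct mechanism: the contract payoff
minus the lying cost `c` if the report differs from the true type. -/
def lpay (c : ℝ) (θ r : WorkerType) (con : Contract) : ℝ :=
  payoff con θ - (if r = θ then 0 else c)

/-- In the explicit direct mechanism with lying cost `c > 0`, truthful reporting is
strictly dominant for every worker type. -/
theorem truthful_strictly_dominant_explicit_direct :
    ∀ c : ℝ, 0 < c →
      ∀ (i : Fin 2) (θ : WorkerType) (m : Fin 2 → WorkerType), m i ≠ θ →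
        lpay c θ θ (directM (Function.update m i θ) i) >
          lpay c θ (m i) (directM m i) := by
  intro c hc i θ m hm
  fin_cases i <;>
    rcases h0 : m 0 with _|_ <;> rcases h1 : m 1 with _|_ <;> rcases θ <;>
      simp_all [lpay, directM, directPair, payoff, Function.update, Fin.ext_iff] <;> linarith
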